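/- arXiv:1301.2439 — 2 statements merged into one kernel-verified Lean document; each statement's English description precedes it below -/
import Mathlib

section
/- Let u be a 1-bounded τ-morphism of a Banach scale E with constant N¹_s(u) satisfying 3 N¹_s(u) < s for all s ≤ τ. Then for every s ∈ (0,τ], every λ ∈ (0, 1 − 3N¹_s(u)/s), and every x ∈ E_s, the exponential series Σ_{j≥0} uʲ(x)/j! converges absolutely in E_{λs} and satisfies |e^u x|_{λs} ≤ (1 − 3N¹_s(u)/((1−λ)s))^{-1} |x|_s. -/
open scoped ENNReal NNReal
open Filter

/-- An `S`-scale of Banach spaces, modelled by an extended-real-valued norm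
`N s` on an ambient vector space `E`; `N s x = ∞` means `x ∉ E_s`.
The inclusions `E_{s'} ⊆ E_s` for `s ≤ s'` are norm-nonincreasing (`mono`),
each `E_s` is complete (`complete`) and separated (`eq_zero`). -/
structure BanachScale (E : Type*) [AddCommGroup E] [Module ℂ E] (S : ℝ) where
  N : ℝ → E → ℝ≥0∞
  n_zero : ∀ s, N s 0 = 0
  n_neg : ∀ s x, N s (-x) = N s x
  n_add : ∀ s x y, N s (x + y) ≤ N s x + N s y
  n_smul : ∀ s (c : ℂ) x, N s (c • x) = (‖c‖₊ : ℝ≥0∞) * N s x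
  mono : ∀ ⦃s s' : ℝ⦄, s ≤ s' → ∀ x, N s x ≤ N s' x
  eq_zero : ∀ x, (∀ s, 0 < s → N s x = 0) → x = 0
  complete : ∀ s : ℝ, 0 < s → ∀ f : ℕ → E, (∀ n, N s (f n) ≠ ∞) →
    (∀ ε : ℝ≥0∞, 0 < ε → ∃ M, ∀ m n, M ≤ m → M ≤ n → N s (f m - f n) < ε) →
    ∃ y : E, Tendsto (fun n => N s (f n - y)) atTop (nhds 0)

/-- `u` is a `k`-bounded `τ`-morphism with constant `C` between the scales
`scE` and `scF`:  `|u x|_s ≤ C σ⁻ᵏ |x|_{s+σ}` for `s ∈ (0,τ)`, `σ ∈ (0,τ-s]`. -/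
def IsBdd {E F : Type*} [AddCommGroup E] [Module ℂ E] [AddCommGroup F] [Module ℂ F]
    {S S' : ℝ} (scE : BanachScale E S) (scF : BanachScale F S')
    (τ : ℝ) (k : ℕ) (C : ℝ≥0) (u : E →ₗ[ℂ] F) : Prop :=
  ∀ s σ : ℝ, 0 < s → 0 < σ → s + σ ≤ τ → ∀ x : E,
    scF.N s (u x) ≤ (C : ℝ≥0∞) * ((ENNReal.ofReal σ)⁻¹) ^ k * scE.N (s + σ) x

/-- Partial sums of the exponential series of `u` applied to `x`. -/
noncomputable def expPartial {E : Type*} [AddCommGroup E] [Module ℂ E]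
    (u : Module.End ℂ E) (n : ℕ) (x : E) : E :=
  ∑ j ∈ Finset.range n, ((j.factorial : ℂ)⁻¹) • ((u ^ j) x)

/-!
One step of `u` costs a factor `C / σ` while lowering the scale index by `σ`. Spreading the loss
`(1 - λ) s` evenly over `j` steps, `σ = (1 - λ) s / j`, gives
`|uʲ x|_{λs} / j! ≤ (C j / ((1 - λ) s))ʲ / j! · |x|_s ≤ (3 C / ((1 - λ) s))ʲ |x|_s`, because
`jʲ / j! ≤ eʲ ≤ 3ʲ`. The exponential series is therefore dominated by a geometric series of ratio
`< 1`, and an absolutely convergent series converges in the complete space `E_{λs}`.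
-/

open Finset Nat

lemma pow_mul_self_div_factorial_le {c : ℝ} (hc : 0 ≤ c) (j : ℕ) :
    (c * j) ^ j / j ! ≤ (3 * c) ^ j := by
  have hj : (j : ℝ) ^ j / j ! ≤ 3 ^ j := calc
    _ ≤ Real.exp j := Real.pow_div_factorial_le_exp _ (by positivity) j
    _ = Real.exp 1 ^ j := by rw [← Real.exp_nat_mul, mul_one]
    _ ≤ 3 ^ j := by gcongr; exact Real.exp_one_lt_three.le
  rw [mul_pow, mul_pow, mul_div_assoc, mul_comm (3 ^ j)]
  exact mul_le_mul_of_nonneg_left hj (by positivity)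

namespace BanachScale

variable {E : Type*} [AddCommGroup E] [Module ℂ E] {S : ℝ} (sc : BanachScale E S)

lemma N_sum_le {ι : Type*} (s : ℝ) (t : Finset ι) (f : ι → E) :
    sc.N s (∑ i ∈ t, f i) ≤ ∑ i ∈ t, sc.N s (f i) := by
  classical
  induction t using Finset.induction_on with
  | empty => simp [sc.n_zero]
  | insert i t hi ih =>
    rw [sum_insert hi, sum_insert hi]
    exact (sc.n_add s _ _).trans (add_le_add_right ih _)

lemma N_sub_comm (s : ℝ) (x y : E) : sc.N s (x - y) = sc.N s (y - x) := by
  rw [← sc.n_neg, neg_sub]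

lemma N_inv_natCast_smul (s : ℝ) {n : ℕ} (hn : n ≠ 0) (x : E) :
    sc.N s ((n : ℂ)⁻¹ • x) = (n : ℝ≥0∞)⁻¹ * sc.N s x := by
  rw [sc.n_smul, nnnorm_inv, ENNReal.coe_inv (by simpa using hn)]
  simp

lemma N_le_of_tendsto {s : ℝ} {f : ℕ → E} {y : E} {B : ℝ≥0∞}
    (hf : Tendsto (fun n => sc.N s (f n - y)) atTop (nhds 0)) (hB : ∀ n, sc.N s (f n) ≤ B) :
    sc.N s y ≤ B := by
  have hle : ∀ n, sc.N s y ≤ B + sc.N s (f n - y) := fun n => calc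
    sc.N s y = sc.N s (f n + -(f n - y)) := by congr 1; abel
    _ ≤ B + sc.N s (f n - y) := by
      rw [← sc.n_neg s (f n - y)]
      exact (sc.n_add s _ _).trans (add_le_add_left (hB n) _)
  exact ge_of_tendsto' (by simpa using hf.const_add B) hle

lemma N_sum_range_sub_le_tsum_tail (s : ℝ) (g : ℕ → E) {m n : ℕ} (h : n ≤ m) :
    sc.N s (∑ j ∈ range m, g j - ∑ j ∈ range n, g j) ≤ ∑' k, sc.N s (g (k + n)) := by
  rw [← sum_Ico_eq_sub _ h, sum_Ico_eq_sum_range]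
  calc _ ≤ ∑ k ∈ range (m - n), sc.N s (g (n + k)) := sc.N_sum_le _ _ _
    _ ≤ ∑' k, sc.N s (g (n + k)) := ENNReal.sum_le_tsum _
    _ = ∑' k, sc.N s (g (k + n)) := by simp_rw [add_comm n]

theorem exists_tendsto_sum_of_tsum_ne_top {s : ℝ} (hs : 0 < s) (g : ℕ → E)
    (hg : ∑' j, sc.N s (g j) ≠ ∞) :
    ∃ y, Tendsto (fun n => sc.N s (∑ j ∈ range n, g j - y)) atTop (nhds 0) ∧
      sc.N s y ≤ ∑' j, sc.N s (g j) := by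
  have hbdd : ∀ n, sc.N s (∑ j ∈ range n, g j) ≤ ∑' j, sc.N s (g j) := fun n =>
    (sc.N_sum_le s _ _).trans (ENNReal.sum_le_tsum _)
  have hcauchy : ∀ ε : ℝ≥0∞, 0 < ε → ∃ M, ∀ m n, M ≤ m → M ≤ n →
      sc.N s (∑ j ∈ range m, g j - ∑ j ∈ range n, g j) < ε := by
    intro ε hε
    obtain ⟨M, hM⟩ :=
      eventually_atTop.mp ((ENNReal.tendsto_sum_nat_add _ hg).eventually_lt_const hε)
    refine ⟨M, fun m n hm hn => ?_⟩
    rcases le_total n m with h | h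
    · exact (sc.N_sum_range_sub_le_tsum_tail s g h).trans_lt (hM n hn)
    · rw [N_sub_comm]
      exact (sc.N_sum_range_sub_le_tsum_tail s g h).trans_lt (hM m hm)
  obtain ⟨y, hy⟩ := sc.complete s hs _ (fun n => ne_top_of_le_ne_top hg (hbdd n)) hcauchy
  exact ⟨y, hy, sc.N_le_of_tendsto hy hbdd⟩

end BanachScale

namespace IsBdd

variable {E : Type*} [AddCommGroup E] [Module ℂ E] {S : ℝ} {sc : BanachScale E S}
  {u : Module.End ℂ E} {C : ℝ≥0}

lemma N_pow_apply_le {τ : ℝ} (hu : IsBdd sc sc τ 1 C u) {σ : ℝ} (hσ : 0 < σ) (j : ℕ) {s : ℝ}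
    (hs : 0 < s) (hj : s + j * σ ≤ τ) (x : E) :
    sc.N s ((u ^ j) x) ≤ ((C : ℝ≥0∞) * (ENNReal.ofReal σ)⁻¹) ^ j * sc.N (s + j * σ) x := by
  induction j generalizing s with
  | zero => simp
  | succ j ih =>
    have hshift : s + ↑(j + 1) * σ = s + σ + j * σ := by push_cast; ring
    have hjσ : 0 ≤ (j : ℝ) * σ := by positivity
    rw [hshift] at hj ⊢
    calc sc.N s ((u ^ (j + 1)) x) = sc.N s (u ((u ^ j) x)) := by
          rw [_root_.pow_succ', Module.End.mul_apply]
      _ ≤ C * (ENNReal.ofReal σ)⁻¹ * sc.N (s + σ) ((u ^ j) x) := by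
          simpa using hu s σ hs hσ (by linarith) ((u ^ j) x)
      _ ≤ C * (ENNReal.ofReal σ)⁻¹ *
            ((C * (ENNReal.ofReal σ)⁻¹) ^ j * sc.N (s + σ + j * σ) x) := by
          gcongr
          exact ih (by linarith) hj
      _ = (C * (ENNReal.ofReal σ)⁻¹) ^ (j + 1) * sc.N (s + σ + j * σ) x := by ring

lemma N_exp_term_le {s lam : ℝ} (hu : IsBdd sc sc s 1 C u) (hs : 0 < s) (hlam : 0 < lam)
    (hlam1 : lam < 1) (x : E) (j : ℕ) :
    sc.N (lam * s) ((j ! : ℂ)⁻¹ • (u ^ j) x) ≤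
      ENNReal.ofReal (3 * C / ((1 - lam) * s)) ^ j * sc.N s x := by
  rcases j.eq_zero_or_pos with rfl | hj
  · simpa using sc.mono (by nlinarith : lam * s ≤ s) x
  set d := (1 - lam) * s
  have hd : 0 < d := by positivity
  have hσ : 0 < d / j := by positivity
  have hsum : lam * s + j * (d / j) = s := by field_simp; ring
  have hiter := hu.N_pow_apply_le hσ j (by positivity) hsum.le x
  rw [hsum] at hiter
  have hratio : (C : ℝ≥0∞) * (ENNReal.ofReal (d / j))⁻¹ = ENNReal.ofReal (C / d * j) := by
    rw [← ENNReal.ofReal_inv_of_pos hσ, ← ENNReal.ofReal_coe_nnreal,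
      ← ENNReal.ofReal_mul C.coe_nonneg, inv_div, mul_div_assoc', div_mul_eq_mul_div]
  have hcoef : (j ! : ℝ≥0∞)⁻¹ * ENNReal.ofReal (C / d * j) ^ j ≤
      ENNReal.ofReal (3 * C / d) ^ j := by
    rw [← ENNReal.ofReal_pow (by positivity), ← ENNReal.ofReal_pow (by positivity),
      ← ENNReal.ofReal_natCast, ← ENNReal.ofReal_inv_of_pos (by positivity),
      ← ENNReal.ofReal_mul (by positivity), inv_mul_eq_div, mul_div_assoc]
    exact ENNReal.ofReal_le_ofReal (pow_mul_self_div_factorial_le (by positivity) j)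
  calc sc.N (lam * s) ((j ! : ℂ)⁻¹ • (u ^ j) x)
      = (j ! : ℝ≥0∞)⁻¹ * sc.N (lam * s) ((u ^ j) x) :=
        sc.N_inv_natCast_smul _ (factorial_ne_zero j) _
    _ ≤ (j ! : ℝ≥0∞)⁻¹ * (ENNReal.ofReal (C / d * j) ^ j * sc.N s x) := by
        rw [← hratio]
        gcongr
    _ = (j ! : ℝ≥0∞)⁻¹ * ENNReal.ofReal (C / d * j) ^ j * sc.N s x := by ring
    _ ≤ ENNReal.ofReal (3 * C / d) ^ j * sc.N s x := by gcongr

lemma tsum_N_exp_term_le {s lam : ℝ} (hu : IsBdd sc sc s 1 C u) (hs : 0 < s) (hlam : 0 < lam)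
    (hlam1 : lam < 1 - 3 * C / s) (x : E) :
    ∑' j : ℕ, sc.N (lam * s) ((j ! : ℂ)⁻¹ • (u ^ j) x) ≤
      ENNReal.ofReal (1 / (1 - 3 * C / ((1 - lam) * s))) * sc.N s x := by
  have hCs : 3 * (C : ℝ) / s < 1 - lam := by linarith
  have hCs' : 3 * (C : ℝ) < (1 - lam) * s := (div_lt_iff₀ hs).mp hCs
  have hd : 0 < (1 - lam) * s := by linarith [C.coe_nonneg]
  set a := 3 * (C : ℝ) / ((1 - lam) * s)
  have ha0 : 0 ≤ a := by positivity
  have ha1 : a < 1 := (div_lt_one hd).mpr hCs'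
  calc ∑' j : ℕ, sc.N (lam * s) ((j ! : ℂ)⁻¹ • (u ^ j) x)
      ≤ ∑' j : ℕ, ENNReal.ofReal a ^ j * sc.N s x :=
        ENNReal.tsum_le_tsum (hu.N_exp_term_le hs hlam (by nlinarith) x)
    _ = (1 - ENNReal.ofReal a)⁻¹ * sc.N s x := by
        rw [ENNReal.tsum_mul_right, ENNReal.tsum_geometric]
    _ = ENNReal.ofReal (1 / (1 - a)) * sc.N s x := by
        rw [one_div, ENNReal.ofReal_inv_of_pos (by linarith), ENNReal.ofReal_sub _ ha0,
          ENNReal.ofReal_one]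

end IsBdd

theorem exp_series_converges_general {E : Type*} [AddCommGroup E] [Module ℂ E] {S : ℝ}
    (sc : BanachScale E S) (τ : ℝ)
    (u : Module.End ℂ E) (C : ℝ → ℝ≥0)
    (hb : ∀ s : ℝ, 0 < s → s ≤ τ → IsBdd sc sc s 1 (C s) u) :
    ∀ s : ℝ, 0 < s → s ≤ τ → ∀ lam : ℝ, 0 < lam → lam < 1 - 3 * (C s : ℝ) / s →
      ∀ x : E, sc.N s x ≠ ∞ →
        (∑' j : ℕ, sc.N (lam * s) (((j.factorial : ℂ)⁻¹) • ((u ^ j) x))) ≠ ∞ ∧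
        ∃ y : E,
          Tendsto (fun n => sc.N (lam * s) (expPartial u n x - y)) atTop (nhds 0) ∧
          sc.N (lam * s) y ≤
            ENNReal.ofReal (1 / (1 - 3 * (C s : ℝ) / ((1 - lam) * s))) * sc.N s x := by
  intro s hs hsτ lam hlam hlam1 x hx
  have hbound := (hb s hs hsτ).tsum_N_exp_term_le hs hlam hlam1 x
  have hfin := ne_top_of_le_ne_top (ENNReal.mul_ne_top ENNReal.ofReal_ne_top hx) hbound
  obtain ⟨y, hy, hyle⟩ := sc.exists_tendsto_sum_of_tsum_ne_top (by positivity) _ hfin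
  exact ⟨hfin, y, hy, hyle.trans hbound⟩

/-- Convergence of the exponential series: if `u` is a `1`-bounded `τ`-morphism with
constants `N¹_s(u) = C s` satisfying `3 C s < s` for all `s ≤ τ`, then for `s ∈ (0,τ]`,
`λ ∈ (0, 1 - 3 C s / s)` and `x ∈ E_s`, the series `Σ uʲ x / j!` converges absolutely
in `E_{λ s}` to some `y` with `|y|_{λs} ≤ (1 - 3 C s/((1-λ)s))⁻¹ |x|_s`. -/
theorem exp_series_converges {E : Type*} [AddCommGroup E] [Module ℂ E] {S : ℝ}
    (sc : BanachScale E S) (τ : ℝ) (hτ : 0 < τ)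
    (u : Module.End ℂ E) (C : ℝ → ℝ≥0)
    (hb : ∀ s : ℝ, 0 < s → s ≤ τ → IsBdd sc sc s 1 (C s) u)
    (hsmall : ∀ s : ℝ, 0 < s → s ≤ τ → 3 * (C s : ℝ) < s) :
    ∀ s : ℝ, 0 < s → s ≤ τ → ∀ lam : ℝ, 0 < lam → lam < 1 - 3 * (C s : ℝ) / s →
      ∀ x : E, sc.N s x ≠ ∞ →
        (∑' j : ℕ, sc.N (lam * s) (((j.factorial : ℂ)⁻¹) • ((u ^ j) x))) ≠ ∞ ∧
        ∃ y : E,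
          Tendsto (fun n => sc.N (lam * s) (expPartial u n x - y)) atTop (nhds 0) ∧
          sc.N (lam * s) y ≤
            ENNReal.ofReal (1 / (1 - 3 * (C s : ℝ) / ((1 - lam) * s))) * sc.N s x :=
  exp_series_converges_general sc τ u C hb
end

section
/- Let (y_k) and (x_k) be sequences of germs of holomorphic functions at 0 in ℂ, and let a be a nonzero germ with y_k = a·x_k for all k. If (y_k) converges (uniformly on a neighborhood of 0), then (x_k) converges as well. Consequently, for any a ∈ O_{ℂ,0}, the image of multiplication by a is a closed subspace of O_{ℂ,0}. -/
open Filter Metric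

/-!
By isolated zeros, `a` has no zero on some small circle `‖w‖ = ρ`, hence `‖a‖ ≥ m > 0` there by
compactness. On that circle `x k - x l = (y k - y l) / a`, so `(x k)` is uniformly Cauchy on the
circle, and by the maximum modulus principle on the whole disc `‖w‖ ≤ ρ`.
-/

theorem AnalyticOnNhd.exists_sphere_forall_ne_zero {𝕜 E : Type*} [RCLike 𝕜]
    [NormedAddCommGroup E] [NormedSpace 𝕜 E] {f : 𝕜 → E} {c : 𝕜} {r : ℝ}
    (hf : AnalyticOnNhd 𝕜 f (ball c r)) (hf₀ : ∃ w ∈ ball c r, f w ≠ 0) :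
    ∃ ρ, 0 < ρ ∧ ρ < r ∧ ∀ w ∈ sphere c ρ, f w ≠ 0 := by
  obtain ⟨w₀, hw₀, hfw₀⟩ := hf₀
  have hr : 0 < r := pos_of_mem_ball hw₀
  rcases (hf c (mem_ball_self hr)).eventually_eq_zero_or_eventually_ne_zero with hzero | hne
  · exact absurd (hf.eqOn_zero_of_preconnected_of_eventuallyEq_zero
      (convex_ball c r).isPreconnected (mem_ball_self hr) hzero hw₀) hfw₀
  obtain ⟨δ, hδ, hδne⟩ := Metric.eventually_nhds_iff_ball.1 (eventually_nhdsWithin_iff.1 hne)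
  refine ⟨min δ r / 2, by positivity, by linarith [min_le_right δ r], fun w hw => hδne w ?_ ?_⟩
  · rw [mem_ball, mem_sphere.1 hw]
    linarith [min_le_left δ r, lt_min hδ hr]
  · rintro rfl
    simp only [mem_sphere, dist_self] at hw
    linarith [lt_min hδ hr]

theorem UniformCauchySeqOn.of_mul_left {ι α 𝕜 : Type*} [NormedField 𝕜] {l : Filter ι}
    {s : Set α} {a : α → 𝕜} {f g : ι → α → 𝕜} {m : ℝ} (hg : UniformCauchySeqOn g l s)
    (hm : 0 < m) (ha : ∀ w ∈ s, m ≤ ‖a w‖) (hfg : ∀ k, ∀ w ∈ s, g k w = a w * f k w) :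
    UniformCauchySeqOn f l s := by
  intro u hu
  obtain ⟨ε, hε, hεu⟩ := Metric.mem_uniformity_dist.1 hu
  filter_upwards [hg _ (dist_mem_uniformity (mul_pos hm hε))] with p hp w hw
  refine hεu (lt_of_mul_lt_mul_left ?_ hm.le)
  calc m * dist (f p.1 w) (f p.2 w)
      ≤ ‖a w‖ * dist (f p.1 w) (f p.2 w) := by gcongr; exact ha w hw
    _ = dist (g p.1 w) (g p.2 w) := by
      rw [dist_eq_norm, dist_eq_norm, hfg _ w hw, hfg _ w hw, ← mul_sub, norm_mul]
    _ < m * ε := hp w hw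

theorem UniformCauchySeqOn.closure_of_frontier {ι E F : Type*} [NormedAddCommGroup E]
    [NormedSpace ℂ E] [Nontrivial E] [NormedAddCommGroup F] [NormedSpace ℂ F] {l : Filter ι}
    {U : Set E} {f : ι → E → F} (hU : Bornology.IsBounded U) (hf : ∀ k, DiffContOnCl ℂ (f k) U)
    (h : UniformCauchySeqOn f l (frontier U)) : UniformCauchySeqOn f l (closure U) := by
  intro u hu
  obtain ⟨ε, hε, hεu⟩ := Metric.mem_uniformity_dist.1 hu
  filter_upwards [h _ (dist_mem_uniformity (half_pos hε))] with p hp z hz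
  refine hεu (lt_of_le_of_lt ?_ (half_lt_self hε))
  rw [dist_eq_norm]
  refine Complex.norm_le_of_forall_mem_frontier_norm_le hU ((hf p.1).sub (hf p.2))
    (fun w hw => ?_) hz
  simpa only [Pi.sub_apply, dist_eq_norm] using (hp w hw).le

theorem UniformCauchySeqOn.tendstoUniformlyOn_limUnder {ι α β : Type*} [UniformSpace β]
    [CompleteSpace β] [Nonempty β] [Nonempty ι] [SemilatticeSup ι] {F : ι → α → β} {s : Set α}
    (hF : UniformCauchySeqOn F atTop s) :
    TendstoUniformlyOn F (fun z => limUnder atTop (F · z)) atTop s :=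
  hF.tendstoUniformlyOn_of_tendsto fun _ hz => (hF.cauchySeq hz).tendsto_limUnder

theorem mul_germ_image_closed_general (r : ℝ)
    (a : ℂ → ℂ) (ha : DifferentiableOn ℂ a (ball (0 : ℂ) r))
    (ha0 : ∃ w ∈ ball (0 : ℂ) r, a w ≠ 0)
    (x y : ℕ → ℂ → ℂ)
    (hx : ∀ k, DifferentiableOn ℂ (x k) (ball (0 : ℂ) r))
    (hxy : ∀ k, ∀ w ∈ ball (0 : ℂ) r, y k w = a w * x k w)
    (ylim : ℂ → ℂ)
    (hy : TendstoUniformlyOn y ylim atTop (ball (0 : ℂ) r)) :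
    ∃ r' : ℝ, 0 < r' ∧ r' ≤ r ∧
      ∃ xlim : ℂ → ℂ,
        TendstoUniformlyOn x xlim atTop (ball (0 : ℂ) r') ∧
        ∀ w ∈ ball (0 : ℂ) r', ylim w = a w * xlim w := by
  obtain ⟨ρ, hρ, hρr, ha_ne⟩ := (ha.analyticOnNhd isOpen_ball).exists_sphere_forall_ne_zero ha0
  have hsphere : sphere (0 : ℂ) ρ ⊆ ball 0 r :=
    sphere_subset_closedBall.trans (closedBall_subset_ball hρr)
  obtain ⟨m, hm, ham⟩ := (isCompact_sphere (0 : ℂ) ρ).exists_forall_le'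
    (ha.continuousOn.mono hsphere).norm fun w hw => norm_pos_iff.2 (ha_ne w hw)
  have hx_sphere : UniformCauchySeqOn x atTop (sphere 0 ρ) :=
    (hy.uniformCauchySeqOn.mono hsphere).of_mul_left hm ham fun k w hw => hxy k w (hsphere hw)
  have hx_ball : UniformCauchySeqOn x atTop (ball 0 ρ) := by
    refine (UniformCauchySeqOn.closure_of_frontier isBounded_ball
      (fun k => (hx k).diffContOnCl_ball (closedBall_subset_ball hρr)) ?_).mono subset_closure
    rwa [frontier_ball 0 hρ.ne']
  refine ⟨ρ, hρ, hρr.le, _, hx_ball.tendstoUniformlyOn_limUnder, fun w hw => ?_⟩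
  have hw' : w ∈ ball (0 : ℂ) r := ball_subset_ball hρr.le hw
  refine tendsto_nhds_unique (hy.tendsto_at hw') ?_
  exact ((hx_ball.cauchySeq hw).tendsto_limUnder.const_mul (a w)).congr fun k =>
    (hxy k w hw').symm

/-- Division by a fixed nonzero germ is sequentially continuous: if `y_k = a·x_k`
with `a` holomorphic and not identically zero near `0`, all `x_k` holomorphic, and
`(y_k)` converges uniformly near `0`, then `(x_k)` converges uniformly on a
(possibly smaller) neighborhood of `0`, and the limit of `(y_k)` is again a
multiple of `a`; hence the image of multiplication by `a` is closed in `O_{ℂ,0}`. -/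
theorem mul_germ_image_closed (r : ℝ) (hr : 0 < r)
    (a : ℂ → ℂ) (ha : DifferentiableOn ℂ a (ball (0 : ℂ) r))
    (ha0 : ∃ w ∈ ball (0 : ℂ) r, a w ≠ 0)
    (x y : ℕ → ℂ → ℂ)
    (hx : ∀ k, DifferentiableOn ℂ (x k) (ball (0 : ℂ) r))
    (hxy : ∀ k, ∀ w ∈ ball (0 : ℂ) r, y k w = a w * x k w)
    (ylim : ℂ → ℂ)
    (hy : TendstoUniformlyOn y ylim atTop (ball (0 : ℂ) r)) :
    ∃ r' : ℝ, 0 < r' ∧ r' ≤ r ∧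
      ∃ xlim : ℂ → ℂ,
        TendstoUniformlyOn x xlim atTop (ball (0 : ℂ) r') ∧
        ∀ w ∈ ball (0 : ℂ) r', ylim w = a w * xlim w :=
  mul_germ_image_closed_general r a ha ha0 x y hx hxy ylim hy
end
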